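/- arXiv:1105.3918 — 2 statements merged into one kernel-verified Lean document; each statement's English description precedes it below -/
import Mathlib

section
/- The candidate measure of Wong–Heyde need not be unique: for the zero process X ≡ 0 (i.e., ξ ≡ 0), for every λ ∈ ℝ the measure P^λ with dP^λ/dP = exp(λW(T) − λ²T/2) satisfies the defining property that W(t) − ∫₀ᵗ X(u) du = W(t) is expressible as W^{P^λ}(t) + ∫₀ᵗ X(u) du modulo a P^λ-Brownian motion; in particular, for distinct λ ≠ λ' the measures P^λ and P^{λ'} are distinct probability measures on F_T. -/
open MeasureTheory ProbabilityTheory Filter Set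
open scoped ENNReal NNReal

/-- `W` is a standard one-dimensional Brownian motion on the time interval `[0,T]` under `P`. -/
structure IsBMOn {Ω : Type*} [MeasurableSpace Ω] (P : Measure Ω) (W : ℝ → Ω → ℝ)
    (T : ℝ) : Prop where
  meas : ∀ t : ℝ, Measurable (W t)
  init : ∀ᵐ ω ∂P, W 0 ω = 0
  cont : ∀ᵐ ω ∂P, ContinuousOn (fun t => W t ω) (Set.Icc 0 T)
  gauss : ∀ s t : ℝ, 0 ≤ s → s ≤ t → t ≤ T →
    P.map (fun ω => W t ω - W s ω) = gaussianReal 0 (Real.toNNReal (t - s))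
  indep : ∀ s t : ℝ, 0 ≤ s → s ≤ t → t ≤ T →
    ProbabilityTheory.Indep
      (MeasurableSpace.comap (fun ω => W t ω - W s ω) Real.measurableSpace)
      (⨆ u ∈ Set.Icc (0:ℝ) s, MeasurableSpace.comap (W u) Real.measurableSpace) P

/-!
Write `E_t = exp(λ W_t - λ² t / 2)`, so that `P^λ = E_T · P`. For an increment `Z = W_t - W_s`
and an event `A` of the past at time `s`, split `E_T = (E_T / E_t) · (E_t / E_s) · E_s`. The
first factor is independent of the past at time `t` and has mean one, so `E` is a martingale;
the second is a function of `Z` alone, independent of `A`, and tilts the law `N(0, t - s)` of `Z`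
into `N(λ (t - s), t - s)`. Hence `P^λ(Z ∈ S, A) = N(λ (t - s), t - s)(S) · P^λ(A)`, which gives
both the Gaussian law of the increments of `W - λ t` and their independence from the past under
`P^λ`. Since `W_T` has mean `λ T` under `P^λ`, distinct `λ` give distinct measures.
-/

open Real

lemma gaussianReal_withDensity_exp (l : ℝ) (v : ℝ≥0) :
    (gaussianReal 0 v).withDensity (fun z => ENNReal.ofReal (exp (l * z - l ^ 2 * v / 2)))
      = gaussianReal (l * v) v := by
  rcases eq_or_ne v 0 with rfl | hv
  · ext S hS
    classical
    rw [withDensity_apply _ hS, gaussianReal_zero_var, setLIntegral_dirac]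
    by_cases h0 : (0 : ℝ) ∈ S <;> simp [Measure.dirac_apply' _ hS, h0]
  · rw [gaussianReal_of_var_ne_zero _ hv, gaussianReal_of_var_ne_zero _ hv,
      ← withDensity_mul _ (measurable_gaussianPDF 0 v) (by fun_prop)]
    congr 1
    funext z
    simp only [Pi.mul_apply, gaussianPDF, gaussianPDFReal]
    rw [← ENNReal.ofReal_mul (by positivity), mul_assoc, ← exp_add]
    congr 3
    field_simp
    ring

lemma setLIntegral_exp_of_map_eq_gaussianReal {Ω : Type*} [MeasurableSpace Ω] {P : Measure Ω}
    {Y : Ω → ℝ} {v : ℝ≥0} (hY : Measurable Y) (hPY : P.map Y = gaussianReal 0 v) (l : ℝ)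
    {S : Set ℝ} (hS : MeasurableSet S) :
    ∫⁻ ω in Y ⁻¹' S, ENNReal.ofReal (exp (l * Y ω - l ^ 2 * v / 2)) ∂P
      = gaussianReal (l * v) v S := by
  rw [← setLIntegral_map (f := fun z => ENNReal.ofReal (exp (l * z - l ^ 2 * v / 2))) hS
    (by fun_prop) hY, hPY, ← withDensity_apply _ hS,
    gaussianReal_withDensity_exp]

lemma MeasurableSpace.comap_sub_const {Ω : Type*} (f : Ω → ℝ) (c : ℝ) :
    MeasurableSpace.comap (fun ω => f ω - c) Real.measurableSpace
      = MeasurableSpace.comap f Real.measurableSpace := by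
  change MeasurableSpace.comap ((· - c) ∘ f) _ = _
  rw [← MeasurableSpace.comap_comp]
  exact congrArg _ (MeasurableEquiv.subRight c).measurableEmbedding.comap_eq

section Girsanov

variable {Ω : Type*} {mΩ : MeasurableSpace Ω} {P : Measure Ω} {W : ℝ → Ω → ℝ} {T : ℝ}

abbrev pastMeasurableSpace (W : ℝ → Ω → ℝ) (s : ℝ) : MeasurableSpace Ω :=
  ⨆ u ∈ Icc (0 : ℝ) s, MeasurableSpace.comap (W u) Real.measurableSpace

lemma measurable_pastMeasurableSpace {u s : ℝ} (hu : 0 ≤ u) (hus : u ≤ s) :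
    Measurable[pastMeasurableSpace W s] (W u) :=
  Measurable.of_comap_le <| le_biSup (fun u => MeasurableSpace.comap (W u) _) ⟨hu, hus⟩

lemma pastMeasurableSpace_mono {s t : ℝ} (hst : s ≤ t) :
    pastMeasurableSpace W s ≤ pastMeasurableSpace W t :=
  biSup_mono fun _ hu => ⟨hu.1, hu.2.trans hst⟩

lemma IsBMOn.pastMeasurableSpace_le (hW : IsBMOn P W T) (s : ℝ) :
    pastMeasurableSpace W s ≤ mΩ :=
  iSup₂_le fun u _ => (hW.meas u).comap_le

lemma IsBMOn.measurable_increment (hW : IsBMOn P W T) (s t : ℝ) :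
    Measurable (fun ω => W t ω - W s ω) :=
  (hW.meas t).sub (hW.meas s)

noncomputable def expIncrement (W : ℝ → Ω → ℝ) (l s t : ℝ) (ω : Ω) : ℝ≥0∞ :=
  ENNReal.ofReal (exp (l * (W t ω - W s ω) - l ^ 2 * (t - s) / 2))

noncomputable def expMartingale (W : ℝ → Ω → ℝ) (l t : ℝ) (ω : Ω) : ℝ≥0∞ :=
  ENNReal.ofReal (exp (l * W t ω - l ^ 2 * t / 2))

lemma expMartingale_eq_expIncrement_mul (l s t : ℝ) (ω : Ω) :
    expMartingale W l t ω = expIncrement W l s t ω * expMartingale W l s ω := by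
  rw [expMartingale, expIncrement, expMartingale, ← ENNReal.ofReal_mul (exp_nonneg _),
    ← exp_add]
  ring_nf

lemma measurable_expMartingale {m : MeasurableSpace Ω} {l t : ℝ} (ht : Measurable[m] (W t)) :
    Measurable[m] (expMartingale W l t) := by
  unfold expMartingale; fun_prop

lemma measurable_expIncrement {m : MeasurableSpace Ω} {l s t : ℝ}
    (h : Measurable[m] (fun ω => W t ω - W s ω)) : Measurable[m] (expIncrement W l s t) := by
  unfold expIncrement; fun_prop

lemma IsBMOn.lintegral_indicator_expIncrement_mul (hW : IsBMOn P W T) (l : ℝ) {s t : ℝ}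
    (hs : 0 ≤ s) (hst : s ≤ t) (htT : t ≤ T) {S : Set ℝ} (hS : MeasurableSet S)
    {G : Ω → ℝ≥0∞} (hG : Measurable[pastMeasurableSpace W s] G) :
    ∫⁻ ω, ((fun ω => W t ω - W s ω) ⁻¹' S).indicator (expIncrement W l s t) ω * G ω ∂P
      = gaussianReal (l * (t - s)) (t - s).toNNReal S * ∫⁻ ω, G ω ∂P := by
  have hZ := hW.measurable_increment s t
  have hZ' : Measurable[MeasurableSpace.comap (fun ω => W t ω - W s ω) Real.measurableSpace]
      (fun ω => W t ω - W s ω) := comap_measurable _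
  rw [lintegral_mul_eq_lintegral_mul_lintegral_of_independent_measurableSpace hZ.comap_le
    (hW.pastMeasurableSpace_le s) (hW.indep s t hs hst htT)
    ((measurable_expIncrement hZ').indicator (hZ' hS)) hG, lintegral_indicator (hZ hS)]
  have h := setLIntegral_exp_of_map_eq_gaussianReal hZ (hW.gauss s t hs hst htT) l hS
  rw [Real.coe_toNNReal _ (sub_nonneg.2 hst)] at h
  rw [← h]
  rfl

lemma IsBMOn.setLIntegral_expMartingale (hW : IsBMOn P W T) (l : ℝ) {t : ℝ} (ht : 0 ≤ t)
    (htT : t ≤ T) {A : Set Ω} (hA : MeasurableSet[pastMeasurableSpace W t] A) :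
    ∫⁻ ω in A, expMartingale W l T ω ∂P = ∫⁻ ω in A, expMartingale W l t ω ∂P := by
  have hG : Measurable[pastMeasurableSpace W t] (A.indicator (expMartingale W l t)) :=
    (measurable_expMartingale (measurable_pastMeasurableSpace ht le_rfl)).indicator hA
  have h := hW.lintegral_indicator_expIncrement_mul l ht htT le_rfl MeasurableSet.univ hG
  simp only [preimage_univ, indicator_univ, measure_univ, one_mul] at h
  rw [← lintegral_indicator (hW.pastMeasurableSpace_le t _ hA),
    ← lintegral_indicator (hW.pastMeasurableSpace_le t _ hA), ← h]
  congr with ω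
  simp only [← indicator_mul_right, ← expMartingale_eq_expIncrement_mul]

lemma IsBMOn.withDensity_preimage_inter (hW : IsBMOn P W T) (l : ℝ) {s t : ℝ}
    (hs : 0 ≤ s) (hst : s ≤ t) (htT : t ≤ T) {S : Set ℝ} (hS : MeasurableSet S)
    {A : Set Ω} (hA : MeasurableSet[pastMeasurableSpace W s] A) :
    P.withDensity (expMartingale W l T) ((fun ω => W t ω - W s ω) ⁻¹' S ∩ A)
      = gaussianReal (l * (t - s)) (t - s).toNNReal S
        * P.withDensity (expMartingale W l T) A := by
  have hZ : Measurable[pastMeasurableSpace W t] (fun ω => W t ω - W s ω) :=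
    (measurable_pastMeasurableSpace (hs.trans hst) le_rfl).sub
      (measurable_pastMeasurableSpace hs hst)
  have hZA : MeasurableSet[pastMeasurableSpace W t] ((fun ω => W t ω - W s ω) ⁻¹' S ∩ A) :=
    (hZ hS).inter (pastMeasurableSpace_mono hst _ hA)
  have hG : Measurable[pastMeasurableSpace W s] (A.indicator (expMartingale W l s)) :=
    (measurable_expMartingale (measurable_pastMeasurableSpace hs le_rfl)).indicator hA
  rw [withDensity_apply _ (hW.pastMeasurableSpace_le t _ hZA),
    withDensity_apply _ (hW.pastMeasurableSpace_le s _ hA),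
    hW.setLIntegral_expMartingale l (hs.trans hst) htT hZA,
    hW.setLIntegral_expMartingale l hs (hst.trans htT) hA,
    ← lintegral_indicator (hW.pastMeasurableSpace_le t _ hZA),
    ← lintegral_indicator (hW.pastMeasurableSpace_le s _ hA),
    ← hW.lintegral_indicator_expIncrement_mul l hs hst htT hS hG]
  congr with ω
  rw [← inter_indicator_mul]
  simp only [← expMartingale_eq_expIncrement_mul]

lemma IsBMOn.isProbabilityMeasure_withDensity_expMartingale [IsProbabilityMeasure P]
    (hW : IsBMOn P W T) (hT : 0 ≤ T) (l : ℝ) :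
    IsProbabilityMeasure (P.withDensity (expMartingale W l T)) := by
  constructor
  rw [withDensity_apply _ MeasurableSet.univ,
    hW.setLIntegral_expMartingale l le_rfl hT MeasurableSet.univ]
  have h : expMartingale W l 0 =ᵐ[P] 1 := hW.init.mono fun ω h => by simp [expMartingale, h]
  simp [lintegral_congr_ae h]

lemma IsBMOn.map_withDensity_expMartingale [IsProbabilityMeasure P] (hW : IsBMOn P W T)
    (l : ℝ) {s t : ℝ} (hs : 0 ≤ s) (hst : s ≤ t) (htT : t ≤ T) :
    (P.withDensity (expMartingale W l T)).map (fun ω => W t ω - W s ω)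
      = gaussianReal (l * (t - s)) (t - s).toNNReal := by
  have := hW.isProbabilityMeasure_withDensity_expMartingale ((hs.trans hst).trans htT) l
  ext S hS
  rw [Measure.map_apply (hW.measurable_increment s t) hS, ← inter_univ (_ ⁻¹' S),
    hW.withDensity_preimage_inter l hs hst htT hS MeasurableSet.univ, measure_univ, mul_one]

lemma IsBMOn.indep_withDensity_expMartingale [IsProbabilityMeasure P] (hW : IsBMOn P W T)
    (l : ℝ) {s t : ℝ} (hs : 0 ≤ s) (hst : s ≤ t) (htT : t ≤ T) :
    Indep (MeasurableSpace.comap (fun ω => W t ω - W s ω) Real.measurableSpace)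
      (pastMeasurableSpace W s) (P.withDensity (expMartingale W l T)) := by
  rw [Indep_iff]
  rintro _ A ⟨S, hS, rfl⟩ hA
  rw [hW.withDensity_preimage_inter l hs hst htT hS hA,
    ← Measure.map_apply (hW.measurable_increment s t) hS,
    hW.map_withDensity_expMartingale l hs hst htT]

theorem IsBMOn.withDensity_expMartingale [IsProbabilityMeasure P] (hW : IsBMOn P W T)
    (l : ℝ) : IsBMOn (P.withDensity (expMartingale W l T)) (fun t ω => W t ω - l * t) T where
  meas t := (hW.meas t).sub_const _
  init := (withDensity_absolutelyContinuous P _).ae_le (hW.init.mono fun ω h => by simp [h])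
  cont := (withDensity_absolutelyContinuous P _).ae_le
    (hW.cont.mono fun ω h => h.sub (continuousOn_const.mul continuousOn_id))
  gauss s t hs hst htT := by
    have hdrift : (fun ω => (W t ω - l * t) - (W s ω - l * s))
        = (· - l * (t - s)) ∘ (fun ω => W t ω - W s ω) := by
      ext; simp only [Function.comp_apply]; ring
    rw [hdrift, ← Measure.map_map (measurable_sub_const _) (hW.measurable_increment s t),
      hW.map_withDensity_expMartingale l hs hst htT, gaussianReal_map_sub_const, sub_self]
  indep s t hs hst htT := by
    have hdrift : (fun ω => (W t ω - l * t) - (W s ω - l * s))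
        = fun ω => (W t ω - W s ω) - l * (t - s) := by
      ext; ring
    simp only [hdrift, MeasurableSpace.comap_sub_const]
    exact hW.indep_withDensity_expMartingale l hs hst htT

lemma IsBMOn.injective_withDensity_expMartingale [IsProbabilityMeasure P] (hW : IsBMOn P W T)
    (hT : 0 < T) : Function.Injective fun l => P.withDensity (expMartingale W l T) := by
  intro l l' h
  have hmap := congrArg (Measure.map (fun ω => W T ω - W 0 ω)) h
  simp only [hW.map_withDensity_expMartingale _ le_rfl hT.le le_rfl, gaussianReal_ext_iff] at hmap
  exact mul_right_cancel₀ (by linarith) hmap.1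

end Girsanov

/-- non-uniqueness of the candidate measure: for the zero process `X ≡ 0`,
for every `λ` the measure `P^λ` with density `exp(λW(T) - λ²T/2)` satisfies the defining
property of a candidate measure: `W(t) - ∫₀ᵗ X(u)du` equals `W^λ(t) + ∫₀ᵗ X(u)du + λt`
where `W^λ(t) = W(t) - λt` is a `P^λ`-Brownian motion on `[0,T]`; moreover for `λ ≠ λ'`
the measures `P^λ` and `P^{λ'}` are distinct. -/
theorem stmt5 {Ω : Type*} [MeasurableSpace Ω] (P : Measure Ω) [IsProbabilityMeasure P]
    (T : ℝ) (hT : 0 < T) (W : ℝ → Ω → ℝ) (hW : IsBMOn P W T)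
    (X : ℝ → Ω → ℝ) (hX : X = fun _ _ => 0)
    (Pl : ℝ → Measure Ω)
    (hPl : ∀ lam : ℝ, Pl lam =
      P.withDensity fun ω => ENNReal.ofReal (Real.exp (lam * W T ω - lam ^ 2 * T / 2))) :
    (∀ lam : ℝ, IsBMOn (Pl lam) (fun t ω => W t ω - lam * t) T) ∧
    (∀ lam : ℝ, ∀ t ∈ Set.Icc (0:ℝ) T, ∀ ω,
      W t ω - (∫ u in (0:ℝ)..t, X u ω) =
        (W t ω - lam * t) + (∫ u in (0:ℝ)..t, X u ω) + lam * t) ∧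
    (∀ lam lam' : ℝ, lam ≠ lam' → Pl lam ≠ Pl lam') := by
  obtain rfl : Pl = fun l => P.withDensity (expMartingale W l T) := funext hPl
  subst hX
  exact ⟨hW.withDensity_expMartingale, fun l t _ ω => by simp,
    fun l l' hne h => hne (hW.injective_withDensity_expMartingale hT h)⟩
end

section
/- Let f: ℝ → ℝ be strictly increasing and continuous with lim_{x→−∞} f(x) = 1 and lim_{x→+∞} f(x) = 2, and define X(t) = f(W(t))/(T−t) for t ∈ [0,T), X(T) = 0, on the canonical Wiener space. Then for every ω ∈ C([0,T],ℝ), lim_{t↑T} (W(t) − ∫₀ᵗ X(u) du) = −∞; consequently, there exists no probability measure Q on (Ω, F_T) under which the process t ↦ W(t) − ∫₀ᵗ X(u) du is a Brownian motion. -/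
open MeasureTheory ProbabilityTheory Filter Set
open scoped ENNReal NNReal

/-
Since `f ≥ 1`, the drift satisfies `X(u) ≥ 1/(T-u)`, so `∫₀ᵗ X ≥ log (T/(T-t)) → ∞` as `t ↑ T`,
while `W(t) = ω(t)` stays bounded; hence `W(t) - ∫₀ᵗ X → -∞` on every path. A Brownian motion
on `[0,T]` has almost surely continuous paths on `[0,T]`, in particular a finite left limit at
`T`, so no measure can make this process a Brownian motion.
-/

open Topology

theorem integral_inv_sub_left {a b c : ℝ} (ha : a < c) (hb : b < c) :
    ∫ u in a..b, (c - u)⁻¹ = Real.log ((c - a) / (c - b)) := by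
  rw [intervalIntegral.integral_comp_sub_left (fun x => x⁻¹) c,
    integral_inv_of_pos (sub_pos.2 hb) (sub_pos.2 ha)]

theorem tendsto_log_div_sub_nhdsLT_atTop {a c : ℝ} (ha : a < c) :
    Tendsto (fun t => Real.log ((c - a) / (c - t))) (𝓝[<] c) atTop := by
  have hsub : Tendsto (fun t => c - t) (𝓝[<] c) (𝓝[>] 0) := by
    have h0 : Tendsto (fun t => c - t) (𝓝[<] c) (𝓝 0) := by
      simpa using ((continuous_sub_left c).tendsto c).mono_left nhdsWithin_le_nhds
    exact tendsto_nhdsWithin_of_tendsto_nhds_of_eventually_within _ h0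
      (eventually_nhdsWithin_of_forall fun _ ht => mem_Ioi.2 (sub_pos.2 ht))
  have := (tendsto_inv_nhdsGT_zero.comp hsub).const_mul_atTop (sub_pos.2 ha)
  exact Real.tendsto_log_atTop.comp (by simpa [div_eq_mul_inv] using this)

theorem tendsto_intervalIntegral_atTop_of_inv_sub_le {x : ℝ → ℝ} {a c : ℝ} (hac : a < c)
    (hx : ContinuousOn x (Ico a c)) (hle : ∀ u ∈ Ico a c, (c - u)⁻¹ ≤ x u) :
    Tendsto (fun t => ∫ u in a..t, x u) (𝓝[<] c) atTop := by
  refine tendsto_atTop_mono' _ ?_ (tendsto_log_div_sub_nhdsLT_atTop hac)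
  filter_upwards [Ioo_mem_nhdsLT hac] with t ⟨hat, htc⟩
  have hIcc : Icc a t ⊆ Ico a c := Icc_subset_Ico_right htc
  have hinv : ContinuousOn (fun u => (c - u)⁻¹) (Icc a t) :=
    (continuousOn_const.sub continuousOn_id).inv₀ fun u hu => (sub_pos.2 (hIcc hu).2).ne'
  rw [← integral_inv_sub_left hac htc]
  exact intervalIntegral.integral_mono_on hat.le (hinv.intervalIntegrable_of_Icc hat.le)
    ((hx.mono hIcc).intervalIntegrable_of_Icc hat.le) fun u hu => hle u (hIcc hu)

theorem ContinuousOn.not_tendsto_atBot_nhdsLT {g : ℝ → ℝ} {a c : ℝ} (hac : a < c)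
    (hg : ContinuousOn g (Icc a c)) : ¬Tendsto g (𝓝[<] c) atBot := by
  refine not_tendsto_atBot_of_tendsto_nhds ((hg c (right_mem_Icc.2 hac.le)).tendsto.mono_left ?_)
  rw [← nhdsWithin_Ioo_eq_nhdsLT hac]
  exact nhdsWithin_mono _ Ioo_subset_Icc_self

theorem stmt6_general [MeasurableSpace C(ℝ, ℝ)]
    (T : ℝ) (hT : 0 < T)
    (f : ℝ → ℝ) (hf_mono : StrictMono f) (hf_cont : Continuous f)
    (hf_bot : Tendsto f atBot (nhds 1))
    (X : ℝ → C(ℝ, ℝ) → ℝ)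
    (hX : ∀ t (ω : C(ℝ, ℝ)), X t ω = if t < T then f (ω t) / (T - t) else 0) :
    (∀ ω : C(ℝ, ℝ),
      Tendsto (fun t => ω t - ∫ u in (0:ℝ)..t, X u ω) (nhdsWithin T (Set.Iio T)) atBot) ∧
    ¬ ∃ Q : Measure C(ℝ, ℝ), IsProbabilityMeasure Q ∧
        IsBMOn Q (fun t ω => ω t - ∫ u in (0:ℝ)..t, X u ω) T := by
  have hf_one : ∀ y, 1 ≤ f y := hf_mono.monotone.le_of_tendsto hf_bot
  have diverges (ω : C(ℝ, ℝ)) :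
      Tendsto (fun t => ω t - ∫ u in (0:ℝ)..t, X u ω) (𝓝[<] T) atBot := by
    have hXω : ∀ u < T, X u ω = f (ω u) / (T - u) := fun u hu => (hX u ω).trans (if_pos hu)
    have hcont : ContinuousOn (X · ω) (Ico 0 T) :=
      ((hf_cont.comp ω.continuous).continuousOn.div (continuousOn_const.sub continuousOn_id)
        fun u hu => (sub_pos.2 hu.2).ne').congr fun u hu => hXω u hu.2
    have hint := tendsto_intervalIntegral_atTop_of_inv_sub_le hT hcont fun u hu => by
      rw [hXω u hu.2, inv_eq_one_div]
      exact div_le_div_of_nonneg_right (hf_one _) (sub_pos.2 hu.2).le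
    have hω : Tendsto ω (𝓝[<] T) (𝓝 (ω T)) := ω.continuous.continuousWithinAt.tendsto
    simpa [sub_eq_add_neg] using hω.add_atBot (tendsto_neg_atTop_atBot.comp hint)
  refine ⟨diverges, ?_⟩
  rintro ⟨Q, _, hBM⟩
  obtain ⟨ω, hω⟩ := hBM.cont.exists
  exact hω.not_tendsto_atBot_nhdsLT hT (diverges ω)

/-- non-existence of the candidate measure: on the canonical space of
continuous paths with coordinate process `W(t)(ω) = ω(t)`, let `f` be strictly increasing
and continuous with limits `1` at `-∞` and `2` at `+∞`, and `X(t) = f(W(t))/(T-t)` for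
`t < T`, `X(T) = 0`. Then for every path `ω`, `W(t) - ∫₀ᵗ X(u)du → -∞` as `t ↑ T`;
consequently there is no probability measure `Q` under which `t ↦ W(t) - ∫₀ᵗ X(u)du` is a
Brownian motion on `[0,T]`. -/
theorem stmt6 [MeasurableSpace C(ℝ, ℝ)] [BorelSpace C(ℝ, ℝ)]
    (T : ℝ) (hT : 0 < T)
    (f : ℝ → ℝ) (hf_mono : StrictMono f) (hf_cont : Continuous f)
    (hf_bot : Tendsto f atBot (nhds 1)) (hf_top : Tendsto f atTop (nhds 2))
    (X : ℝ → C(ℝ, ℝ) → ℝ)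
    (hX : ∀ t (ω : C(ℝ, ℝ)), X t ω = if t < T then f (ω t) / (T - t) else 0) :
    (∀ ω : C(ℝ, ℝ),
      Tendsto (fun t => ω t - ∫ u in (0:ℝ)..t, X u ω) (nhdsWithin T (Set.Iio T)) atBot) ∧
    ¬ ∃ Q : Measure C(ℝ, ℝ), IsProbabilityMeasure Q ∧
        IsBMOn Q (fun t ω => ω t - ∫ u in (0:ℝ)..t, X u ω) T :=
  stmt6_general T hT f hf_mono hf_cont hf_bot X hX
end
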